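/- arXiv:2004.13655 — 2 statements merged into one kernel-verified Lean document; each statement's English description precedes it below -/
import Mathlib

section
/- Let G be a preordered topological abelian group whose positive cone G₊ has an order unit u. Then the Dirac measure δ_u is power universal for the stochastic preorder on compactly supported finite Radon measures under convolution: whenever μ and ν are compactly supported finite Radon measures on G with μ ≤ ν in the stochastic preorder, there exists k ∈ ℕ such that ν ≤ δ_{k·u} ∗ μ in the stochastic preorder. -/
/-!
Compactness of the supports and the fact that `[-u, u]` is a neighbourhood of `0` make the
archimedean property of `u` uniform on the compact set `supp ν - supp μ`: some `k • u` dominates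
every difference `a - b` with `a ∈ supp ν`, `b ∈ supp μ`. Then every point of `supp ν` lies below
every point of `k • u + supp μ`, so a closed upward closed set meeting `supp ν` carries the whole
mass of the translate of `μ`, while one missing `supp ν` is `ν`-null.
-/

open MeasureTheory Filter

/-- The support of a measure: the set of points all of whose open neighbourhoods have
positive measure. -/
def msupport {X : Type*} [TopologicalSpace X] [MeasurableSpace X] (μ : Measure X) : Set X :=
  {x | ∀ U : Set X, IsOpen U → x ∈ U → 0 < μ U}

/-- The stochastic preorder on measures of equal total mass, with respect to the positive
cone `P`: comparison on all closed upward closed sets. -/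
def StochLE {G : Type*} [AddCommGroup G] [TopologicalSpace G] [MeasurableSpace G]
    (P : Set G) (μ ν : Measure G) : Prop :=
  μ Set.univ = ν Set.univ ∧
    ∀ C : Set G, IsClosed C → (∀ x ∈ C, ∀ g ∈ P, x + g ∈ C) → μ C ≤ ν C

open Set Topology

lemma msupport_eq_support {X : Type*} [TopologicalSpace X] [MeasurableSpace X]
    (μ : Measure X) : msupport μ = μ.support := by
  ext x
  rw [Measure.support_eq_forall_isOpen]
  exact forall_congr' fun _ => Imp.swap

lemma AddSubsemigroup.exists_nsmul_sub_mem_of_isCompact {G : Type*} [AddCommGroup G]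
    [TopologicalSpace G] [ContinuousSub G] (S : AddSubsemigroup G) {u : G} (hu : u ∈ S)
    (harch : ∀ x : G, ∃ k : ℕ, k • u - x ∈ S) (hnhds : {x : G | u - x ∈ S} ∈ 𝓝 0)
    {D : Set G} (hD : IsCompact D) :
    ∃ k : ℕ, ∀ d ∈ D, k • u - d ∈ S := by
  let W : ℕ → Set G := fun k => interior {y | k • u - y ∈ S}
  have hW_mono : Monotone W := by
    refine monotone_nat_of_le_succ fun k => interior_mono fun y hy => ?_
    simpa only [mem_ofPred_eq, succ_nsmul, add_sub_right_comm] using S.add_mem hy hu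
  have hW_cover : D ⊆ ⋃ k, W k := by
    intro x _
    obtain ⟨k, hk⟩ := harch x
    have hnear : {y | u - (y - x) ∈ S} ∈ 𝓝 x :=
      (continuous_sub_right x).tendsto' x 0 (sub_self x) hnhds
    refine mem_iUnion.2
      ⟨k + 1, mem_interior_iff_mem_nhds.2 (mem_of_superset hnear fun y hy => ?_)⟩
    have hsum := S.add_mem hk hy
    rwa [show k • u - x + (u - (y - x)) = (k + 1) • u - y by rw [succ_nsmul]; abel] at hsum
  obtain ⟨k, hk⟩ := hD.elim_directed_cover W (fun _ => isOpen_interior) hW_cover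
    hW_mono.directed_le
  exact ⟨k, fun d hd => interior_subset (s := {y | k • u - y ∈ S}) (hk hd)⟩

lemma MeasureTheory.Measure.dirac_conv_eq_map {G : Type*} [AddMonoid G] [MeasurableSpace G]
    [MeasurableSingletonClass G] [MeasurableAdd G] (a : G) (μ : Measure G) [SFinite μ] :
    (Measure.dirac a).conv μ = μ.map (a + ·) := by
  -- `(+)` need not be jointly measurable; it is a.e. equal to `(a + ·) ∘ Prod.snd` on `{a} × G`.
  have hfst : ∀ᵐ p ∂μ.map (Prod.mk a), p.1 = a :=
    (ae_map_iff measurable_prodMk_left.aemeasurable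
      (measurable_fst (measurableSet_singleton a))).2 (Eventually.of_forall fun _ => rfl)
  have hadd : AEMeasurable (fun p : G × G => p.1 + p.2) (μ.map (Prod.mk a)) :=
    (measurable_snd.const_add a).aemeasurable.congr (hfst.mono fun p hp => by simp only [hp])
  rw [Measure.conv, Measure.dirac_prod,
    hadd.map_map_of_aemeasurable measurable_prodMk_left.aemeasurable]
  rfl

lemma stochLE_map_add_of_forall_mem {G : Type*} [AddCommGroup G] [TopologicalSpace G]
    [MeasurableSpace G] [OpensMeasurableSpace G] [MeasurableAdd G] {P : Set G}
    {μ ν : Measure G} [μ.InnerRegular] [ν.InnerRegular] (hmass : μ univ = ν univ) {c : G}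
    (hc : ∀ a ∈ ν.support, ∀ b ∈ μ.support, c + b - a ∈ P) :
    StochLE P ν (μ.map (c + ·)) := by
  have hmeas : Measurable (c + · : G → G) := measurable_const_add c
  refine ⟨by rw [Measure.map_apply hmeas .univ, preimage_univ, hmass], fun C hC hCup => ?_⟩
  rw [Measure.map_apply hmeas hC.measurableSet]
  by_cases hmeet : (C ∩ ν.support).Nonempty
  · obtain ⟨a, haC, ha⟩ := hmeet
    have hsub : μ.support ⊆ (c + ·) ⁻¹' C := fun b hb => by
      simpa using hCup a haC _ (hc a ha b hb)
    calc ν C ≤ ν univ := measure_mono (subset_univ C)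
      _ = μ μ.support := by
        rw [← hmass, measure_congr (ae_eq_univ.2 Measure.measure_compl_support_of_innerRegular)]
      _ ≤ μ ((c + ·) ⁻¹' C) := measure_mono hsub
  · calc ν C ≤ ν ν.supportᶜ := measure_mono fun x hx hxS => hmeet ⟨x, hx, hxS⟩
      _ = 0 := Measure.measure_compl_support_of_innerRegular
      _ ≤ _ := zero_le

theorem dirac_orderUnit_power_universal_general
    {G : Type*} [AddCommGroup G] [TopologicalSpace G] [IsTopologicalAddGroup G] [T2Space G]
    [MeasurableSpace G] [BorelSpace G]
    (P : Set G) (hPadd : ∀ x ∈ P, ∀ y ∈ P, x + y ∈ P)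
    (u : G) (huP : u ∈ P)
    (harch : ∀ x : G, ∃ k : ℕ, k • u - x ∈ P)
    (hnbhd : {x : G | x + u ∈ P ∧ u - x ∈ P} ∈ nhds (0 : G))
    (μ ν : Measure G) [IsFiniteMeasure μ]
    (hμR : μ.InnerRegular) (hνR : ν.InnerRegular)
    (hμc : IsCompact (msupport μ)) (hνc : IsCompact (msupport ν))
    (hle : StochLE P μ ν) :
    ∃ k : ℕ, StochLE P ν ((Measure.dirac (k • u)).conv μ) := by
  let S : AddSubsemigroup G := ⟨P, fun hx hy => hPadd _ hx _ hy⟩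
  rw [msupport_eq_support] at hμc hνc
  obtain ⟨k, hk⟩ := S.exists_nsmul_sub_mem_of_isCompact huP harch
    (mem_of_superset hnbhd fun _ hx => hx.2) ((hνc.prod hμc).image continuous_sub)
  refine ⟨k, ?_⟩
  rw [Measure.dirac_conv_eq_map]
  refine stochLE_map_add_of_forall_mem hle.1 fun a ha b hb => ?_
  have hab : k • u - (a - b) ∈ S := hk _ ⟨(a, b), ⟨ha, hb⟩, rfl⟩
  rwa [sub_sub_eq_add_sub] at hab

/-- The Dirac measure at an order unit `u` is power universal for the stochastic preorder on
compactly supported finite Radon measures under convolution: if `μ ≤ ν` stochastically, then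
`ν ≤ δ_{k • u} ∗ μ` for some `k ∈ ℕ`. -/
theorem dirac_orderUnit_power_universal
    {G : Type*} [AddCommGroup G] [TopologicalSpace G] [IsTopologicalAddGroup G] [T2Space G]
    [MeasurableSpace G] [BorelSpace G]
    (P : Set G) (hPclosed : IsClosed P) (hPadd : ∀ x ∈ P, ∀ y ∈ P, x + y ∈ P)
    (hP0 : (0 : G) ∈ P)
    (u : G) (huP : u ∈ P)
    (harch : ∀ x : G, ∃ k : ℕ, k • u - x ∈ P)
    (hnbhd : {x : G | x + u ∈ P ∧ u - x ∈ P} ∈ nhds (0 : G))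
    (μ ν : Measure G) [IsFiniteMeasure μ] [IsFiniteMeasure ν]
    (hμR : μ.InnerRegular) (hνR : ν.InnerRegular)
    (hμc : IsCompact (msupport μ)) (hνc : IsCompact (msupport ν))
    (hle : StochLE P μ ν) :
    ∃ k : ℕ, StochLE P ν ((Measure.dirac (k • u)).conv μ) :=
  dirac_orderUnit_power_universal_general P hPadd u huP harch hnbhd μ ν hμR hνR hμc hνc hle
end

section
/- Let G be a preordered topological abelian group whose positive cone G₊ has an order unit u. Then every monotone additive map t : G → ℝ (i.e. t(x + y) = t(x) + t(y) for all x, y, and t(x) ≤ t(y) whenever x ≤ y) is continuous. -/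
open Filter Topology

/-!
An additive map is continuous as soon as it is continuous at `0`, and it is continuous at `0`
as soon as it is bounded on a neighbourhood `V` of `0`: if `|f| ≤ C` on `V` and `C < n ε`, then
`|f| < ε` on the neighbourhood `{x | n • x ∈ V}`. For a monotone additive `t`, the order
interval `[-u, u]` is such a neighbourhood, with bound `t u`.
-/

theorem AddMonoidHom.continuous_of_abs_le_on_nhds_zero {G : Type*} [AddCommGroup G]
    [TopologicalSpace G] [IsTopologicalAddGroup G] (f : G →+ ℝ) {V : Set G} (hV : V ∈ 𝓝 0)
    {C : ℝ} (hC : ∀ x ∈ V, |f x| ≤ C) : Continuous f := by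
  refine continuous_of_continuousAt_zero f ?_
  rw [ContinuousAt, map_zero, Metric.tendsto_nhds]
  intro ε hε
  obtain ⟨n, hn⟩ := exists_nat_gt (C / ε)
  have hCn : C < n * ε := (div_lt_iff₀ hε).mp hn
  have hnV : ∀ᶠ x in 𝓝 (0 : G), n • x ∈ V :=
    (continuous_nsmul n).continuousAt.preimage_mem_nhds (by rwa [smul_zero])
  filter_upwards [hnV] with x hx
  have hbound : (n : ℝ) * |f x| < n * ε := by
    calc (n : ℝ) * |f x| = |f (n • x)| := by
          rw [map_nsmul, nsmul_eq_mul, abs_mul, Nat.abs_cast]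
      _ ≤ C := hC _ hx
      _ < n * ε := hCn
  simpa [Real.dist_eq] using lt_of_mul_lt_mul_left hbound n.cast_nonneg

theorem AddMonoidHom.abs_apply_le_of_add_mem_of_sub_mem {G : Type*} [AddCommGroup G] {P : Set G}
    (t : G →+ ℝ) (hmono : ∀ x y : G, y - x ∈ P → t x ≤ t y) {u x : G} (hlow : x + u ∈ P)
    (hupp : u - x ∈ P) : |t x| ≤ t u := by
  have hneg : -t u ≤ t x := by
    simpa using hmono (-u) x (by rwa [sub_neg_eq_add])
  exact abs_le.mpr ⟨hneg, hmono x u hupp⟩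

theorem monotone_additive_continuous_general
    {G : Type*} [AddCommGroup G] [TopologicalSpace G] [IsTopologicalAddGroup G]
    (P : Set G)
    (u : G)
    (hnbhd : {x : G | x + u ∈ P ∧ u - x ∈ P} ∈ nhds (0 : G))
    (t : G → ℝ)
    (htadd : ∀ x y : G, t (x + y) = t x + t y)
    (htmono : ∀ x y : G, y - x ∈ P → t x ≤ t y) :
    Continuous t :=
  let φ := AddMonoidHom.mk' t htadd
  φ.continuous_of_abs_le_on_nhds_zero hnbhd fun _ hx =>
    φ.abs_apply_le_of_add_mem_of_sub_mem htmono hx.1 hx.2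

/-- On a preordered topological abelian group whose positive cone `P` has an order unit `u`,
every monotone additive real-valued map is continuous. -/
theorem monotone_additive_continuous
    {G : Type*} [AddCommGroup G] [TopologicalSpace G] [IsTopologicalAddGroup G] [T2Space G]
    (P : Set G) (hPclosed : IsClosed P) (hPadd : ∀ x ∈ P, ∀ y ∈ P, x + y ∈ P)
    (hP0 : (0 : G) ∈ P)
    (u : G) (huP : u ∈ P)
    (harch : ∀ x : G, ∃ k : ℕ, k • u - x ∈ P)
    (hnbhd : {x : G | x + u ∈ P ∧ u - x ∈ P} ∈ nhds (0 : G))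
    (t : G → ℝ)
    (htadd : ∀ x y : G, t (x + y) = t x + t y)
    (htmono : ∀ x y : G, y - x ∈ P → t x ≤ t y) :
    Continuous t :=
  monotone_additive_continuous_general P u hnbhd t htadd htmono
end
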